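/- Consequently, if M > E[M_c(z)] = ∫_{I_z} (2πD/(χα₊(z)))λ(z)dz, then the second moment of the expected density E[ρ] decreases at a uniform negative rate, so E[ρ] cannot remain a smooth nonnegative global solution; thus the critical mass for the expected density is M̄_c = E[M_c(z)]. -/

import Mathlib

open MeasureTheory Set

/-!
Since `M > E[M_c] ≥ 0`, the bound on `I'` is a strictly negative constant `-ε`, so by the
mean value theorem `I t ≤ I 0 - ε t`, which becomes negative for large `t`, contradicting
`I ≥ 0`.
-/

theorem sub_le_mul_sub_of_hasDerivAt_le {f f' : ℝ → ℝ} {a C : ℝ}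
    (hf : ∀ t, a ≤ t → HasDerivAt f (f' t) t) (hf' : ∀ t, a ≤ t → f' t ≤ C)
    {t : ℝ} (ht : a ≤ t) : f t - f a ≤ C * (t - a) := by
  refine (convex_Ici a).image_sub_le_mul_sub_of_deriv_le
    (fun s hs => (hf s hs).continuousAt.continuousWithinAt) ?_ ?_ a (mem_Ici.mpr le_rfl) t ht ht
  · intro s hs
    rw [interior_Ici] at hs
    exact (hf s hs.le).differentiableAt.differentiableWithinAt
  · intro s hs
    rw [interior_Ici] at hs
    rw [(hf s hs.le).deriv]
    exact hf' s hs.le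

theorem not_nonneg_of_hasDerivAt_le_neg {f f' : ℝ → ℝ} {a ε : ℝ} (hε : 0 < ε)
    (hf : ∀ t, a ≤ t → HasDerivAt f (f' t) t) (hf' : ∀ t, a ≤ t → f' t ≤ -ε) :
    ¬ ∀ t, a ≤ t → 0 ≤ f t := by
  intro hnonneg
  set T := a + (f a + 1) / ε
  have haT : a ≤ T := le_add_of_nonneg_right (by have := hnonneg a le_rfl; positivity)
  have hdecay := sub_le_mul_sub_of_hasDerivAt_le hf hf' haT
  have hεT : -ε * (T - a) = -(f a + 1) := by
    simp only [T, add_sub_cancel_left]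
    field_simp
  linarith [hnonneg T haT]

theorem integral_criticalMass_nonneg {Z : Type*} [MeasurableSpace Z] (μ : Measure Z)
    {D χ : ℝ} (hD : 0 < D) (hχ : 0 < χ) {α : Z → ℝ} (hα : ∀ z, 0 < α z) :
    0 ≤ ∫ z, 2 * Real.pi * D / (χ * α z) ∂μ :=
  integral_nonneg fun z => by have := hα z; positivity

theorem stmt13_general {Z : Type*} [MeasurableSpace Z] (μ : Measure Z)
    (D χ M : ℝ) (hD : 0 < D) (hχ : 0 < χ)
    (α : Z → ℝ) (hα : ∀ z, 0 < α z)
    (Mc : Z → ℝ) (hMc : ∀ z, Mc z = 2 * Real.pi * D / (χ * α z))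
    (hM : (∫ z, Mc z ∂μ) < M)
    (I : ℝ → ℝ) (hInonneg : ∀ t, 0 ≤ t → 0 ≤ I t)
    (d : ℝ → ℝ) (hd : ∀ t, 0 ≤ t → HasDerivAt I (d t) t)
    (hdle : ∀ t, 0 ≤ t →
      d t ≤ -(χ / (2 * Real.pi)) * M * (M - ∫ z, Mc z ∂μ)) :
    False := by
  have hMc_nonneg : 0 ≤ ∫ z, Mc z ∂μ := by
    simpa only [← hMc] using integral_criticalMass_nonneg μ hD hχ hα
  have hM_pos : 0 < M := hMc_nonneg.trans_lt hM
  have hrate : 0 < χ / (2 * Real.pi) * M * (M - ∫ z, Mc z ∂μ) := by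
    have := sub_pos.mpr hM
    positivity
  exact not_nonneg_of_hasDerivAt_le_neg hrate hd (fun t ht => (hdle t ht).trans_eq (by ring))
    hInonneg

/-- The critical mass for the expected density is `M̄_c = E[M_c(z)]`: if
`M > E[M_c(z)]` and the second moment `I(t) ≥ 0` of the expected density decreases
at the uniform rate `I' ≤ −(χ/(2π)) M (M − E[M_c])` for all `t ≥ 0`, then `E[ρ]`
cannot remain a smooth nonnegative global solution. -/
theorem stmt13 {Z : Type*} [MeasurableSpace Z] (μ : Measure Z) [IsProbabilityMeasure μ]
    (D χ M : ℝ) (hD : 0 < D) (hχ : 0 < χ)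
    (α : Z → ℝ) (hα : ∀ z, 0 < α z)
    (Mc : Z → ℝ) (hMc : ∀ z, Mc z = 2 * Real.pi * D / (χ * α z))
    (hMcint : Integrable Mc μ)
    (hM : (∫ z, Mc z ∂μ) < M)
    (I : ℝ → ℝ) (hInonneg : ∀ t, 0 ≤ t → 0 ≤ I t)
    (d : ℝ → ℝ) (hd : ∀ t, 0 ≤ t → HasDerivAt I (d t) t)
    (hdle : ∀ t, 0 ≤ t →
      d t ≤ -(χ / (2 * Real.pi)) * M * (M - ∫ z, Mc z ∂μ)) :
    False :=
  stmt13_general μ D χ M hD hχ α hα Mc hMc hM I hInonneg d hd hdle
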